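/- arXiv:1102.2337 — 8 statements merged into one kernel-verified Lean document; each statement's English description precedes it below -/
import Mathlib

section
/- The generalized Catalan numbers satisfy C_n^{(p)} = (1/((p-1)n+1)) · binom(pn, n) for all n ≥ 0 and p ≥ 2, where C_n^{(p)} is defined by the recursion C_0^{(p)} = 1 and C_n^{(p)} = Σ over all p-tuples (i_1,…,i_p) of nonnegative integers with i_1+…+i_p = n-1 of the product C_{i_1}^{(p)} ⋯ C_{i_p}^{(p)}. -/
/-- p-ary bracketings: terms over one variable `x` with one p-ary operation symbol `ω`. -/
inductive Brack (p : ℕ) : Type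
  | x : Brack p
  | node : (Fin p → Brack p) → Brack p

namespace Brack

/-- occurrence number: number of occurrences of ω -/
def occ {p : ℕ} : Brack p → ℕ
  | .x => 0
  | .node f => 1 + ∑ i, occ (f i)

/-- length: number of occurrences of x -/
def len {p : ℕ} : Brack p → ℕ
  | .x => 1
  | .node f => ∑ i, len (f i)

/-- evaluation of a bracketing in a groupoid, variables enumerated left-to-right
starting at position `j`. -/
def evalFrom {p : ℕ} {A : Type*} (op : (Fin p → A) → A) (v : ℕ → A) :
    Brack p → ℕ → A
  | .x, j => v j
  | .node f, j =>
      op (fun i => evalFrom op v (f i)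
        (j + ∑ k ∈ Finset.univ.filter (· < i), len (f k)))

/-- the term function induced by a bracketing -/
def eval {p : ℕ} {A : Type*} (op : (Fin p → A) → A) (t : Brack p) (v : ℕ → A) : A :=
  evalFrom op v t 0

/-- prefix word of a bracketing: `true` codes ω, `false` codes x -/
def word {p : ℕ} : Brack p → List Bool
  | .x => [false]
  | .node f => true :: (List.ofFn (fun i => word (f i))).flatten

/-- auxiliary: scan a word, recording 1 + number of x's before each ω -/
def STaux : List Bool → ℕ → List ℕ
  | [], _ => []
  | true :: w, c => (c + 1) :: STaux w c
  | false :: w, c => STaux w (c + 1)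

/-- insertion tuple of a bracketing: the i-th entry is one plus the number
of x's preceding the i-th occurrence of ω in the prefix notation -/
def ST {p : ℕ} (t : Brack p) : List ℕ := STaux (word t) 0

/-- replace the i-th (0-based) occurrence of x in `t` by `s` -/
def replaceLeaf {p : ℕ} : Brack p → ℕ → Brack p → Brack p
  | .x, i, s => if i = 0 then s else .x
  | .node f, i, s => .node (fun j =>
      let off := ∑ k ∈ Finset.univ.filter (· < j), len (f k)
      if off ≤ i ∧ i < off + len (f j) then replaceLeaf (f j) (i - off) s else f j)

/-- β_i : insertion of ω x … x at the i-th (1-based) occurrence of x -/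
def beta {p : ℕ} (i : ℕ) (t : Brack p) : Brack p :=
  replaceLeaf t (i - 1) (.node (fun _ => .x))

/-- left depth: depth of leftmost leaf (binary case) -/
def dl : Brack 2 → ℕ
  | .x => 0
  | .node f => dl (f 0) + 1

/-- right depth: depth of rightmost leaf (binary case) -/
def dr : Brack 2 → ℕ
  | .x => 0
  | .node f => dr (f 1) + 1

/-- left factor of a binary bracketing -/
def leftF : Brack 2 → Brack 2
  | .x => .x
  | .node f => f 0

/-- whether a bracketing is the single variable x -/
def isX {p : ℕ} : Brack p → Bool
  | .x => true
  | .node _ => false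

/-- number of pairs of eggs, i.e. subterm occurrences of ω x x (binary case) -/
def eggs : Brack 2 → ℕ
  | .x => 0
  | .node f => (if isX (f 0) && isX (f 1) then 1 else 0) + eggs (f 0) + eggs (f 1)

end Brack

/-- generalized Catalan numbers -/
def genCat (p : ℕ) : ℕ → ℕ
  | 0 => 1
  | n + 1 =>
      ∑ v ∈ (Finset.Nat.antidiagonalTuple p n).attach, ∏ k : Fin p, genCat p (v.1 k)
  decreasing_by
    have hv := Finset.Nat.mem_antidiagonalTuple.mp v.2
    have hle : v.1 k ≤ n := by
      calc v.1 k ≤ ∑ i, v.1 i :=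
            Finset.single_le_sum (fun i _ => Nat.zero_le _) (Finset.mem_univ k)
        _ = n := hv
    omega

/-- the set M(n,k,p) of weakly increasing n-tuples of positive integers
with u_i ≤ (p-1)(i-1)+k (here indices are 0-based) -/
def Mset (n k p : ℕ) : Set (Fin n → ℕ) :=
  {u | (∀ i : Fin n, 1 ≤ u i ∧ u i ≤ (p - 1) * (i : ℕ) + k) ∧
    ∀ i j : Fin n, i ≤ j → u i ≤ u j}

/-!
The generating function `G = ∑ C_n^{(p)} X^n` satisfies `G = 1 + X G^p`, so
`G^(k+1) = G^k + X G^(k+p)`. On coefficients this is the recurrence of the Raney numbers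
`k / (p n + k) * (p n + k).choose n`, which by induction on `n` and then `k` are the coefficients
of `G^k`. For `k = 1` this reads `(p n + 1) C_n^{(p)} = (p n + 1).choose n`, and
`(p n + 1).choose n * ((p - 1) n + 1) = (p n).choose n * (p n + 1)`.
-/

open PowerSeries Finset

theorem PowerSeries.coeff_pow_eq_sum_antidiagonalTuple {R : Type*} [CommSemiring R]
    (φ : R⟦X⟧) (k n : ℕ) :
    coeff n (φ ^ k) = ∑ v ∈ Nat.antidiagonalTuple k n, ∏ i, coeff (v i) φ := by
  rw [← Fin.prod_const, coeff_prod]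
  exact sum_equiv Finsupp.equivFunOnFinite (by simp [Nat.mem_antidiagonalTuple]) (by simp)

theorem genCat_succ (p n : ℕ) :
    genCat p (n + 1) = ∑ v ∈ Nat.antidiagonalTuple p n, ∏ k, genCat p (v k) := by
  rw [genCat]
  exact sum_attach (Nat.antidiagonalTuple p n) fun v => ∏ k, genCat p (v k)

noncomputable def genCatSeries (p : ℕ) : ℚ⟦X⟧ :=
  mk fun n => (genCat p n : ℚ)

theorem genCatSeries_eq_one_add_X_mul_pow (p : ℕ) :
    genCatSeries p = 1 + X * genCatSeries p ^ p := by
  ext (_ | n)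
  · simp [genCatSeries, genCat]
  · simp [genCatSeries, coeff_pow_eq_sum_antidiagonalTuple, genCat_succ, coeff_one]

theorem genCatSeries_pow_succ (p k : ℕ) :
    genCatSeries p ^ (k + 1) = genCatSeries p ^ k + X * genCatSeries p ^ (k + p) := by
  nth_rw 1 [pow_succ', genCatSeries_eq_one_add_X_mul_pow]
  ring

/-- The Raney numbers; at `n = k = 0` the formula gives the junk value `0` instead of `1`. -/
noncomputable def raney (p n k : ℕ) : ℚ :=
  k * (p * n + k).choose n / (p * n + k)

theorem raney_succ_succ {p : ℕ} (hp : 0 < p) (m k : ℕ) :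
    raney p (m + 1) (k + 1) = raney p (m + 1) k + raney p m (k + p) := by
  generalize hN : p * (m + 1) + k = N
  have hN0 : (N : ℚ) ≠ 0 := by rw [← hN]; positivity
  have hpascal : ((N + 1).choose (m + 1) : ℚ) = N.choose m + N.choose (m + 1) := by
    exact_mod_cast Nat.choose_succ_succ' N m
  have habsorb : ((N : ℚ) + 1) * N.choose m = (N + 1).choose (m + 1) * (m + 1) := by
    exact_mod_cast Nat.add_one_mul_choose_eq N m
  have hNq : (p : ℚ) * (m + 1) + k = N := by exact_mod_cast hN
  unfold raney
  rw [show p * (m + 1) + (k + 1) = N + 1 by omega, show p * m + (k + p) = N by rw [← hN]; ring,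
    hN]
  push_cast
  rw [show (p : ℚ) * (m + 1) + (k + 1) = N + 1 by linear_combination hNq, hNq,
    show (p : ℚ) * m + (k + p) = N by linear_combination hNq, ← add_div,
    div_eq_div_iff (by positivity) hN0]
  linear_combination (k * (N + 1) : ℚ) * hpascal - p * habsorb -
    ((N + 1).choose (m + 1) : ℚ) * hNq

theorem coeff_genCatSeries_pow {p : ℕ} (hp : 0 < p) {n k : ℕ} (hnk : n ≠ 0 ∨ k ≠ 0) :
    coeff n (genCatSeries p ^ k) = raney p n k := by
  induction n using Nat.strong_induction_on generalizing k with
  | _ n ih =>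
  cases n with
  | zero =>
    have hk : (k : ℚ) ≠ 0 := by simpa using hnk
    simp [raney, genCatSeries, genCat, hk]
  | succ m =>
    induction k with
    | zero => simp [raney, coeff_one]
    | succ k ihk =>
      rw [genCatSeries_pow_succ, map_add, coeff_succ_X_mul, ihk (Or.inl m.succ_ne_zero),
        ih m m.lt_add_one (Or.inr (by omega)), raney_succ_succ hp]

theorem succ_mul_genCat_eq_choose {p : ℕ} (hp : 0 < p) (n : ℕ) :
    (p * n + 1) * genCat p n = (p * n + 1).choose n := by
  have h := coeff_genCatSeries_pow hp (n := n) (k := 1) (Or.inr one_ne_zero)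
  rw [pow_one, genCatSeries, coeff_mk, raney, Nat.cast_one, one_mul] at h
  rw [← Nat.cast_inj (R := ℚ)]
  push_cast
  rw [h]
  field_simp

theorem stmt_2 (p : ℕ) (hp : 2 ≤ p) (n : ℕ) :
    ((p - 1) * n + 1) * genCat p n = Nat.choose (p * n) n := by
  have hsub : p * n + 1 - n = (p - 1) * n + 1 := by
    have : n ≤ p * n := Nat.le_mul_of_pos_left n (by omega)
    rw [Nat.sub_one_mul]
    omega
  apply Nat.eq_of_mul_eq_mul_left (p * n).succ_pos
  calc (p * n + 1) * (((p - 1) * n + 1) * genCat p n)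
      = ((p - 1) * n + 1) * ((p * n + 1) * genCat p n) := by ring
    _ = (p * n + 1).choose n * (p * n + 1 - n) := by
      rw [succ_mul_genCat_eq_choose (by omega), hsub, mul_comm]
    _ = (p * n + 1) * (p * n).choose n := by rw [← Nat.choose_mul_succ_eq, mul_comm]
end

section
/- The number of p-ary bracketings with occurrence number n equals the generalized Catalan number C_n^{(p)}. -/
namespace Brack

def children {p : ℕ} : Brack p → (Fin p → Brack p)
  | .x => fun _ => .x
  | .node f => f

lemma occ_eq_zero {p : ℕ} {t : Brack p} (h : occ t = 0) : t = .x := by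
  cases t with
  | x => rfl
  | node f => simp [occ] at h

def equivZero (p : ℕ) : {t : Brack p // occ t = 0} ≃ Unit where
  toFun _ := ()
  invFun _ := ⟨.x, rfl⟩
  left_inv := fun ⟨t, ht⟩ => Subtype.ext (occ_eq_zero ht).symm
  right_inv _ := rfl

def equivSucc (p n : ℕ) :
    {t : Brack p // occ t = n + 1} ≃ {g : Fin p → Brack p // ∑ i, occ (g i) = n} where
  toFun t := ⟨children t.1, by
    obtain ⟨t, ht⟩ := t
    cases t with
    | x => simp [occ] at ht
    | node f => simp only [children]; simp only [occ] at ht; omega⟩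
  invFun g := ⟨.node g.1, by simp only [occ, g.2]; omega⟩
  left_inv := fun ⟨t, ht⟩ => by
    cases t with
    | x => simp [occ] at ht
    | node f => rfl
  right_inv g := rfl

def equivSigma (p n : ℕ) :
    {g : Fin p → Brack p // ∑ i, occ (g i) = n} ≃
      Σ v : {v // v ∈ Finset.Nat.antidiagonalTuple p n},
        {g : Fin p → Brack p // ∀ i, occ (g i) = v.1 i} where
  toFun g := ⟨⟨fun i => occ (g.1 i), Finset.Nat.mem_antidiagonalTuple.mpr g.2⟩,
    ⟨g.1, fun _ => rfl⟩⟩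
  invFun s := ⟨s.2.1, by
    have h1 : ∑ i, occ (s.2.1 i) = ∑ i, s.1.1 i :=
      Finset.sum_congr rfl fun i _ => s.2.2 i
    rw [h1]; exact Finset.Nat.mem_antidiagonalTuple.mp s.1.2⟩
  left_inv g := Subtype.ext rfl
  right_inv := fun ⟨⟨v, hv⟩, ⟨g, hg⟩⟩ => by
    have hv' : (fun i => occ (g i)) = v := funext hg
    subst hv'
    rfl

def bigEquiv (p n : ℕ) :
    {t : Brack p // occ t = n + 1} ≃
      Σ v : {v // v ∈ Finset.Nat.antidiagonalTuple p n},
        ∀ i : Fin p, {t : Brack p // occ t = v.1 i} :=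
  (equivSucc p n).trans ((equivSigma p n).trans
    (Equiv.sigmaCongrRight fun v => Equiv.subtypePiEquivPi (p := fun i t => occ t = v.1 i)))

lemma tuple_le {p n : ℕ} (v : {v // v ∈ Finset.Nat.antidiagonalTuple p n}) (i : Fin p) :
    v.1 i ≤ n := by
  have := Finset.Nat.mem_antidiagonalTuple.mp v.2
  calc v.1 i ≤ ∑ j, v.1 j :=
        Finset.single_le_sum (fun j _ => Nat.zero_le _) (Finset.mem_univ i)
    _ = n := this

lemma finite_occ (p : ℕ) : ∀ n, Finite {t : Brack p // occ t = n} := by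
  intro n
  induction n using Nat.strong_induction_on with
  | _ n ih =>
    match n with
    | 0 => exact Finite.of_equiv _ (equivZero p).symm
    | n + 1 =>
      haveI : ∀ (v : {v // v ∈ Finset.Nat.antidiagonalTuple p n}) (i : Fin p),
          Finite {t : Brack p // occ t = v.1 i} :=
        fun v i => ih _ (Nat.lt_succ_of_le (tuple_le v i))
      exact Finite.of_equiv _ (bigEquiv p n).symm

lemma natCard_sigma {ι : Type*} [Fintype ι] (f : ι → Type*) [∀ i, Finite (f i)] :
    Nat.card (Σ i, f i) = ∑ i, Nat.card (f i) := by
  haveI := fun i => Fintype.ofFinite (f i)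
  simp [Nat.card_eq_fintype_card, Fintype.card_sigma]

lemma card_occ (p : ℕ) : ∀ n, Nat.card {t : Brack p // occ t = n} = genCat p n := by
  intro n
  induction n using Nat.strong_induction_on with
  | _ n ih =>
    match n with
    | 0 =>
      rw [Nat.card_congr (equivZero p)]
      simp [genCat]
    | n + 1 =>
      haveI : ∀ (v : {v // v ∈ Finset.Nat.antidiagonalTuple p n}) (i : Fin p),
          Finite {t : Brack p // occ t = v.1 i} :=
        fun v i => finite_occ p _
      rw [Nat.card_congr (bigEquiv p n), natCard_sigma]
      have h1 : ∀ v : {v // v ∈ Finset.Nat.antidiagonalTuple p n},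
          Nat.card (∀ i : Fin p, {t : Brack p // occ t = v.1 i})
            = ∏ i : Fin p, genCat p (v.1 i) := by
        intro v
        rw [Nat.card_pi]
        exact Finset.prod_congr rfl fun i _ =>
          ih _ (Nat.lt_succ_of_le (tuple_le v i))
      rw [Finset.sum_congr rfl fun v _ => h1 v]
      rw [genCat, ← Finset.univ_eq_attach]

end Brack

theorem stmt_3 (p : ℕ) (hp : 2 ≤ p) (n : ℕ) :
    Nat.card {t : Brack p // Brack.occ t = n} = genCat p n :=
  Brack.card_occ p n
end

section
/- For every k ≥ 1 and n ≥ 0, the cardinality of M(n,k,p) := { u ∈ ℕ^n : 1 ≤ u_i ≤ (p-1)(i-1)+k for all i, and u is weakly increasing } equals (k/((p-1)n+k)) · binom(pn + k - 1, n). -/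
/-!
Splitting `M(n+1, k+1, p)` according to whether `u₁ = 1` gives the recurrence
`|M(n+1, k+1)| = |M(n, k+p)| + |M(n+1, k)|`: dropping a leading `1` shifts every bound by `p - 1`,
and otherwise subtracting `1` from every entry lowers every bound by one. Together with
`|M(0, k)| = 1` and `|M(n+1, 0)| = 0` this recurrence determines the numbers, and the Raney numbers
`k / ((p-1)n + k) · C(pn + k - 1, n)` satisfy it by Pascal's rule.
-/

open Finset

def Mfinset (n k p : ℕ) : Finset (Fin n → ℕ) :=
  {u ∈ Fintype.piFinset fun i : Fin n => Icc 1 ((p - 1) * (i : ℕ) + k) | Monotone u}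

lemma mem_Mfinset {n k p : ℕ} {u : Fin n → ℕ} : u ∈ Mfinset n k p ↔ u ∈ Mset n k p := by
  simp only [Mfinset, mem_filter, Fintype.mem_piFinset, mem_Icc]
  rfl

lemma coe_Mfinset (n k p : ℕ) : (Mfinset n k p : Set (Fin n → ℕ)) = Mset n k p :=
  Set.ext fun _ => mem_Mfinset

lemma natCard_Mset (n k p : ℕ) : Nat.card (Mset n k p) = #(Mfinset n k p) := by
  rw [← coe_Mfinset, Nat.card_coe_set_eq, Set.ncard_coe_finset]

lemma card_Mfinset_zero (k p : ℕ) : #(Mfinset 0 k p) = 1 :=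
  card_eq_one.mpr ⟨finZeroElim, eq_singleton_iff_unique_mem.mpr
    ⟨mem_Mfinset.mpr ⟨finZeroElim, fun i => i.elim0⟩, fun _ _ => funext fun i => i.elim0⟩⟩

lemma card_Mfinset_succ_zero (n p : ℕ) : #(Mfinset (n + 1) 0 p) = 0 := by
  refine card_eq_zero.mpr (eq_empty_of_forall_notMem fun u hu => ?_)
  have := (mem_Mfinset.mp hu).1 0
  simp at this
  omega

section Recurrence

variable {n k p : ℕ}

lemma sub_one_mul_succ_add_succ (hp : 1 ≤ p) (i : ℕ) :
    (p - 1) * (i + 1) + (k + 1) = (p - 1) * i + (k + p) := by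
  obtain ⟨d, rfl⟩ := Nat.exists_eq_add_of_le' hp
  simp only [Nat.add_sub_cancel]
  ring

lemma card_Mfinset_head_eq_one (hp : 1 ≤ p) :
    #{u ∈ Mfinset (n + 1) (k + 1) p | u 0 = 1} = #(Mfinset n (k + p) p) := by
  refine card_bij' (fun u _ => Fin.tail u) (fun v _ => Fin.cons 1 v) ?_ ?_ ?_ ?_
  · intro u hu
    obtain ⟨⟨hb, hm⟩, -⟩ := mem_filter.mp hu |>.imp_left mem_Mfinset.mp
    refine mem_Mfinset.mpr ⟨fun i => ?_, fun i j hij => hm _ _ (Fin.succ_le_succ_iff.mpr hij)⟩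
    rw [← sub_one_mul_succ_add_succ hp]
    exact hb i.succ
  · intro v hv
    obtain ⟨hb, hm⟩ := mem_Mfinset.mp hv
    have hb' : ∀ i, 1 ≤ (Fin.cons 1 v : Fin (n + 1) → ℕ) i ∧
        (Fin.cons 1 v : Fin (n + 1) → ℕ) i ≤ (p - 1) * i + (k + 1) := by
      refine Fin.cases (by simp) fun i => ?_
      rw [Fin.cons_succ, Fin.val_succ, sub_one_mul_succ_add_succ hp]
      exact hb i
    refine mem_filter.mpr ⟨mem_Mfinset.mpr ⟨hb', fun i j hij => ?_⟩, rfl⟩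
    induction j using Fin.cases with
    | zero => rw [Fin.le_zero_iff.mp hij]
    | succ j =>
      induction i using Fin.cases with
      | zero => exact (hb' j.succ).1
      | succ i => simpa using hm _ _ (Fin.succ_le_succ_iff.mp hij)
  · intro u hu
    conv_rhs => rw [← Fin.cons_self_tail u, (mem_filter.mp hu).2]
  · intro v _
    exact Fin.tail_cons _ _

lemma card_Mfinset_head_ne_one :
    #{u ∈ Mfinset (n + 1) (k + 1) p | u 0 ≠ 1} = #(Mfinset (n + 1) k p) := by
  refine card_bij' (fun u _ x => u x - 1) (fun v _ x => v x + 1) ?_ ?_ ?_ ?_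
  · intro u hu
    obtain ⟨⟨hb, hm⟩, hu0⟩ := mem_filter.mp hu |>.imp_left mem_Mfinset.mp
    refine mem_Mfinset.mpr ⟨fun i => ?_, fun i j hij => Nat.sub_le_sub_right (hm _ _ hij) 1⟩
    have := hb i
    have := (hb 0).1
    have : u 0 ≤ u i := hm _ _ (Fin.zero_le i)
    dsimp only
    omega
  · intro v hv
    obtain ⟨hb, hm⟩ := mem_Mfinset.mp hv
    refine mem_filter.mpr ⟨mem_Mfinset.mpr ⟨fun i => ?_, fun i j hij => ?_⟩, ?_⟩
    · have := hb i
      dsimp only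
      omega
    · exact Nat.add_le_add_right (hm _ _ hij) 1
    · have := (hb 0).1
      dsimp only
      omega
  · intro u hu
    have hb := (mem_Mfinset.mp (mem_filter.mp hu).1).1
    funext x
    have := (hb x).1
    exact Nat.sub_add_cancel this
  · intro v _
    rfl

lemma card_Mfinset_succ_succ (hp : 1 ≤ p) :
    #(Mfinset (n + 1) (k + 1) p) = #(Mfinset n (k + p) p) + #(Mfinset (n + 1) k p) := by
  rw [← card_filter_add_card_filter_not (fun u => u 0 = 1), card_Mfinset_head_eq_one hp,
    card_Mfinset_head_ne_one]

end Recurrence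

theorem mul_eq_mul_choose_of_raney_rec {p : ℕ} (hp : 1 ≤ p) (f : ℕ → ℕ → ℕ)
    (hzero : ∀ k, f 0 k = 1) (hsucc_zero : ∀ n, f (n + 1) 0 = 0)
    (hrec : ∀ n k, f (n + 1) (k + 1) = f n (k + p) + f (n + 1) k) (n k : ℕ) :
    f n k * ((p - 1) * n + k) = k * (p * n + k - 1).choose n := by
  obtain ⟨d, rfl⟩ := Nat.exists_eq_add_of_le' hp
  rw [Nat.add_sub_cancel]
  induction n generalizing k with
  | zero => simp [hzero]
  | succ n ih =>
    induction k with
    | zero => simp [hsucc_zero]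
    | succ k ihk =>
      set m := d * (n + 1) + k + n
      have hm_head : (d + 1) * n + (k + (d + 1)) - 1 = m := by
        simp only [m, Nat.succ_mul, Nat.mul_succ]; omega
      have hm_tail : (d + 1) * (n + 1) + k - 1 = m := by
        simp only [m, Nat.succ_mul, Nat.mul_succ]; omega
      have hm_goal : (d + 1) * (n + 1) + (k + 1) - 1 = m + 1 := by
        simp only [m, Nat.succ_mul, Nat.mul_succ]; omega
      have hchoose : m.choose (n + 1) * (n + 1) = m.choose n * (d * (n + 1) + k) := by
        rw [Nat.choose_succ_right_eq, Nat.add_sub_cancel]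
      have h_head := ih (k + (d + 1))
      rw [hm_head] at h_head
      rw [hm_tail] at ihk
      -- the ballot-number form `f (n+1) k = C(m, n+1) - d C(m, n)` of the tail count
      have h_tail' : f (n + 1) k + d * m.choose n = m.choose (n + 1) := by
        rcases Nat.eq_zero_or_pos (d * (n + 1) + k) with hD | hD
        · obtain ⟨rfl, rfl⟩ : d = 0 ∧ k = 0 := by
            constructor <;> nlinarith
          simpa [hsucc_zero, eq_comm] using hchoose
        · refine Nat.eq_of_mul_eq_mul_right hD ?_
          linear_combination ihk + d * hchoose.symm
      rw [hrec, hm_goal, Nat.choose_succ_succ]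
      linear_combination h_head + ihk + h_tail'

theorem stmt_4_general (p : ℕ) (hp : 2 ≤ p) (k n : ℕ) :
    Nat.card (Mset n k p) * ((p - 1) * n + k) = k * Nat.choose (p * n + k - 1) n := by
  rw [natCard_Mset]
  exact mul_eq_mul_choose_of_raney_rec (by omega) (fun n k => #(Mfinset n k p))
    (card_Mfinset_zero · p) (card_Mfinset_succ_zero · p)
    (fun _ _ => card_Mfinset_succ_succ (by omega)) n k

theorem stmt_4 (p : ℕ) (hp : 2 ≤ p) (k n : ℕ) (hk : 1 ≤ k) :
    Nat.card (Mset n k p) * ((p - 1) * n + k) = k * Nat.choose (p * n + k - 1) n :=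
  stmt_4_general p hp k n
end

section
/- For every k ≥ 1 and n ≥ 0, Σ_{m=0}^{k-1} ((p+m)/((p-1)(n+1)+m+1)) · Π_{l=m+1}^{n+m} ((p-1)(n+1)+l) = (1/(n+1)) · (k/((p-1)(n+1)+k)) · Π_{l=k}^{n+k} ((p-1)(n+1)+l). -/
/-! Writing `c = (p - 1)(n + 1)` and `Q a = ∏_{l=a+1}^{n+a} (c + l)`, the right-hand side equals
`k Q k / (n + 1)`. Since `Q (k + 1) (c + k + 1) = Q k (c + n + k + 1)`, its increments are
`(k + 1) Q (k + 1) - k Q k = (c + (k + 1)(n + 1)) Q k / (c + k + 1)`, and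
`c + (k + 1)(n + 1) = (n + 1)(p + k)`: the sum telescopes. -/

open Finset

theorem prod_Icc_add_one_add_one_mul {M : Type*} [CommMonoid M] (f : ℕ → M) (a n : ℕ) :
    (∏ l ∈ Icc (a + 1 + 1) (n + (a + 1)), f l) * f (a + 1) =
      (∏ l ∈ Icc (a + 1) (n + a), f l) * f (n + a + 1) := by
  rw [mul_comm, Icc_add_one_left_eq_Ioc, ← add_assoc,
    mul_prod_Ioc_eq_prod_Icc (by omega), prod_Icc_succ_top (by omega)]

theorem mul_sub_prod_Icc_mul_add_one {R : Type*} [CommRing R] {c q : R} {n : ℕ}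
    (hc : c = (q - 1) * (n + 1)) (k : ℕ) :
    (((k : R) + 1) * ∏ l ∈ Icc (k + 1 + 1) (n + (k + 1)), (c + l) -
        k * ∏ l ∈ Icc (k + 1) (n + k), (c + l)) * (c + k + 1) =
      (n + 1) * (q + k) * ∏ l ∈ Icc (k + 1) (n + k), (c + l) := by
  have h := prod_Icc_add_one_add_one_mul (fun l : ℕ => c + l) k n
  push_cast at h
  linear_combination (k + 1 : R) * h + (∏ l ∈ Icc (k + 1) (n + k), (c + l)) * hc

section

variable {K : Type*} [Field K] [LinearOrder K] [IsStrictOrderedRing K]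

theorem div_add_mul_prod_Icc_eq {c : K} (hc : 0 ≤ c) (k n : ℕ) :
    (k : K) / (c + k) * ∏ l ∈ Icc k (n + k), (c + l) =
      k * ∏ l ∈ Icc (k + 1) (n + k), (c + l) := by
  rcases Nat.eq_zero_or_pos k with rfl | hk
  · simp
  have hck : c + k ≠ 0 := by positivity
  rw [← mul_prod_Ioc_eq_prod_Icc (by omega), ← Icc_add_one_left_eq_Ioc]
  field_simp

theorem sum_range_div_mul_prod_Icc {q : K} (hq : 1 ≤ q) (k n : ℕ) :
    ∑ m ∈ range k, (q + m) / ((q - 1) * (n + 1) + m + 1) *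
        ∏ l ∈ Icc (m + 1) (n + m), ((q - 1) * (n + 1) + l) =
      k * (∏ l ∈ Icc (k + 1) (n + k), ((q - 1) * (n + 1) + l)) / (n + 1) := by
  have hc : 0 ≤ (q - 1) * (n + 1) := mul_nonneg (sub_nonneg.2 hq) (by positivity)
  induction k with
  | zero => simp
  | succ k ih =>
    have hck : (q - 1) * (n + 1) + k + 1 ≠ 0 := by positivity
    rw [sum_range_succ, ih, Nat.cast_succ]
    field_simp
    linear_combination -mul_sub_prod_Icc_mul_add_one (q := q) (n := n) rfl k

end

theorem stmt_6_general (p : ℕ) (hp : 2 ≤ p) (k n : ℕ) :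
    ∑ m ∈ Finset.range k,
        (((p : ℚ) + m) / (((p : ℚ) - 1) * (n + 1) + m + 1)) *
          ∏ l ∈ Finset.Icc (m + 1) (n + m), (((p : ℚ) - 1) * (n + 1) + l) =
      (1 / ((n : ℚ) + 1)) * ((k : ℚ) / (((p : ℚ) - 1) * (n + 1) + k)) *
        ∏ l ∈ Finset.Icc k (n + k), (((p : ℚ) - 1) * (n + 1) + l) := by
  have hp1 : (1 : ℚ) ≤ p := by exact_mod_cast one_le_two.trans hp
  have hc : 0 ≤ ((p : ℚ) - 1) * (n + 1) := mul_nonneg (sub_nonneg.2 hp1) (by positivity)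
  rw [sum_range_div_mul_prod_Icc hp1, mul_assoc, div_add_mul_prod_Icc_eq hc]
  ring

theorem stmt_6 (p : ℕ) (hp : 2 ≤ p) (k n : ℕ) (hk : 1 ≤ k) :
    ∑ m ∈ Finset.range k,
        (((p : ℚ) + m) / (((p : ℚ) - 1) * (n + 1) + m + 1)) *
          ∏ l ∈ Finset.Icc (m + 1) (n + m), (((p : ℚ) - 1) * (n + 1) + l) =
      (1 / ((n : ℚ) + 1)) * ((k : ℚ) / (((p : ℚ) - 1) * (n + 1) + k)) *
        ∏ l ∈ Finset.Icc k (n + k), (((p : ℚ) - 1) * (n + 1) + l) :=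
  stmt_6_general p hp k n
end

section
/- The map ST sending each p-ary bracketing t with occurrence number n to its insertion tuple in ℕ^n is injective. -/
/-!
The scan `STaux` can be undone once the total number of `x`'s is known: an entry equal to the
current counter plus one signals an `ω`, otherwise an `x` is read. That number is `len t`, which the
occurrence number `occ t = (ST t).length` determines through `len t = (p - 1) occ t + 1`. Finally the
prefix word is a prefix-free code, so it determines the bracketing.
-/

theorem List.flatten_map_append_inj {α β : Type*} (e : α → List β) :
    ∀ {as bs : List α} {l l' : List β}, as.length = bs.length →
      (∀ a ∈ as, ∀ b m m', e a ++ m = e b ++ m' → a = b ∧ m = m') →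
      (as.map e).flatten ++ l = (bs.map e).flatten ++ l' → as = bs ∧ l = l'
  | [], [], _, _, _, _, h => ⟨rfl, by simpa using h⟩
  | a :: as, b :: bs, l, l', hlen, hcode, h => by
    simp only [List.map_cons, List.flatten_cons, List.append_assoc] at h
    obtain ⟨rfl, htail⟩ := hcode a List.mem_cons_self b _ _ h
    obtain ⟨rfl, rfl⟩ := flatten_map_append_inj e (by simpa using hlen)
      (fun a ha => hcode a (List.mem_cons_of_mem _ ha)) htail
    exact ⟨rfl, rfl⟩

namespace Brack

theorem le_of_mem_STaux {w : List Bool} {c a : ℕ} (h : a ∈ STaux w c) : c + 1 ≤ a := by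
  induction w generalizing c with
  | nil => simp [STaux] at h
  | cons b w ih =>
    cases b with
    | true =>
      rcases List.mem_cons.mp h with rfl | h
      · exact le_rfl
      · exact ih h
    | false => exact (ih h).trans' (by omega)

-- The head `c + 1` of the right side is smaller than every entry of the left side.
theorem STaux_false_cons_ne_STaux_true_cons (v v' : List Bool) (c : ℕ) :
    STaux (false :: v) c ≠ STaux (true :: v') c := by
  intro h
  have hmem : c + 1 ∈ STaux v (c + 1) := by
    rw [STaux] at h
    exact h ▸ List.mem_cons_self
  exact absurd (le_of_mem_STaux hmem) (by omega)

theorem length_STaux (w : List Bool) (c : ℕ) : (STaux w c).length = w.count true := by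
  induction w generalizing c with
  | nil => rfl
  | cons b w ih => cases b <;> simp [STaux, ih]

theorem STaux_inj_of_count_false_eq {w w' : List Bool} {c : ℕ}
    (hf : w.count false = w'.count false) (h : STaux w c = STaux w' c) : w = w' := by
  induction w generalizing w' c with
  | nil =>
    rcases w' with _ | ⟨_ | _, _⟩
    · rfl
    · simp at hf
    · simp [STaux] at h
  | cons b v ih =>
    rcases w' with _ | ⟨b', v'⟩
    · cases b <;> simp [STaux] at h hf
    cases b <;> cases b'
    · rw [ih (by simpa using hf) h]
    · exact absurd h (STaux_false_cons_ne_STaux_true_cons _ _ _)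
    · exact absurd h.symm (STaux_false_cons_ne_STaux_true_cons _ _ _)
    · simp only [STaux, List.cons.injEq, true_and] at h
      rw [ih (by simpa using hf) h]

theorem word_append_inj {p : ℕ} {t s : Brack p} {l l' : List Bool}
    (h : word t ++ l = word s ++ l') : t = s ∧ l = l' := by
  induction t generalizing s l l' with
  | x => cases s <;> simp_all [word]
  | node f ih =>
    cases s with
    | x => simp [word] at h
    | node g =>
      simp only [word, List.cons_append, List.cons.injEq, true_and, List.ofFn_comp'] at h
      obtain ⟨hfg, rfl⟩ := List.flatten_map_append_inj word (by simp)
        (fun _ ha _ _ _ hw => by obtain ⟨i, rfl⟩ := List.mem_ofFn.mp ha; exact ih i hw) h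
      exact ⟨congrArg node (List.ofFn_injective hfg), rfl⟩

theorem word_injective {p : ℕ} : Function.Injective (word (p := p)) :=
  fun _ _ h => (word_append_inj (l := []) (l' := []) (by rw [h])).1

theorem count_false_word {p : ℕ} : ∀ t : Brack p, (word t).count false = len t
  | .x => rfl
  | .node f => by
    simp [word, len, List.count_flatten, List.sum_ofFn, count_false_word]

theorem count_true_word {p : ℕ} : ∀ t : Brack p, (word t).count true = occ t
  | .x => rfl
  | .node f => by
    simp [word, occ, List.count_flatten, List.sum_ofFn, count_true_word, add_comm]

theorem len_eq_occ {p : ℕ} : ∀ t : Brack p, (len t : ℤ) = (p - 1) * occ t + 1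
  | .x => by simp [len, occ]
  | .node f => by
    simp only [len, occ, Nat.cast_sum, Nat.cast_add, Nat.cast_one, len_eq_occ]
    rw [Finset.sum_add_distrib, ← Finset.mul_sum]
    simp only [Finset.sum_const, Finset.card_univ, Fintype.card_fin, Int.nsmul_eq_mul, mul_one]
    ring

theorem length_ST {p : ℕ} (t : Brack p) : (ST t).length = occ t := by
  rw [ST, length_STaux, count_true_word]

end Brack

theorem stmt_7_general (p : ℕ) :
    Function.Injective (Brack.ST (p := p)) := by
  intro t s h
  have hocc : t.occ = s.occ := by rw [← Brack.length_ST, h, Brack.length_ST]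
  have hlen : (t.len : ℤ) = s.len := by rw [Brack.len_eq_occ, Brack.len_eq_occ, hocc]
  refine Brack.word_injective (Brack.STaux_inj_of_count_false_eq ?_ h)
  rw [Brack.count_false_word, Brack.count_false_word]
  exact_mod_cast hlen

theorem stmt_7 (p : ℕ) (hp : 2 ≤ p) :
    Function.Injective (Brack.ST (p := p)) :=
  stmt_7_general p
end

section
/- If a groupoid A = (A, ω) with a p-ary operation ω satisfies the associativity identities at level 2 (i.e., all bracketings with two occurrences of ω induce the same ((2p-1)-ary) term function), then for every n, all bracketings with n occurrences of ω induce the same term function on A. -/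
/-!
Write `s ≈ t` when `s` and `t` induce the same term function. This relation is a congruence
(children with equally many variable occurrences may be replaced by `≈`-equivalent ones) and it is
stable under substituting bracketings for the variable occurrences. Hence the level-2 identities
`ω(x, …, ω(x, …, x), …, x) ≈ ω(ω(x, …, x), x, …, x)`, with the inner `ω` at any position `j`, can
be applied inside any bracketing. With them every bracketing is `≈` the left comb with the same
number of `ω`s: by induction its children may be taken to be left combs, and then the rightmost
nontrivial child is moved, one `ω` at a time, into the first child, which stays a left comb.
-/
namespace Brack

variable {p : ℕ} {A : Type*}

def leafOffset (f : Fin p → Brack p) (c : ℕ) : ℕ :=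
  ∑ k ∈ Finset.univ.filter (fun k : Fin p => (k : ℕ) < c), len (f k)

lemma leafOffset_zero (f : Fin p → Brack p) : leafOffset f 0 = 0 := by
  simp [leafOffset]

lemma leafOffset_succ (f : Fin p → Brack p) {c : ℕ} (hc : c < p) :
    leafOffset f (c + 1) = leafOffset f c + len (f ⟨c, hc⟩) := by
  have h : Finset.univ.filter (fun k : Fin p => (k : ℕ) < c + 1) =
      insert ⟨c, hc⟩ (Finset.univ.filter (fun k : Fin p => (k : ℕ) < c)) := by
    ext k
    simp only [Finset.mem_filter, Finset.mem_univ, true_and, Finset.mem_insert, Fin.ext_iff]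
    omega
  rw [leafOffset, leafOffset, h, Finset.sum_insert (by simp), add_comm]

lemma len_node (f : Fin p → Brack p) : len (.node f) = leafOffset f p := by
  simp [len, leafOffset]

lemma len_eq_of_pos (hp : 0 < p) (t : Brack p) : len t = (p - 1) * occ t + 1 := by
  induction t with
  | x => simp [len, occ]
  | node f ih =>
    simp only [len, occ, ih, Finset.sum_add_distrib, ← Finset.mul_sum, Finset.sum_const,
      Finset.card_univ, Fintype.card_fin, smul_eq_mul, mul_one, mul_add]
    omega

section eval

variable (op : (Fin p → A) → A)

lemma evalFrom_eq_eval (t : Brack p) (v : ℕ → A) (j : ℕ) :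
    evalFrom op v t j = eval op t (fun m => v (j + m)) := by
  induction t generalizing v j with
  | x => simp [evalFrom, eval]
  | node f ih =>
    rw [eval, evalFrom, evalFrom]
    simp only [ih, zero_add, add_assoc]

lemma eval_node (f : Fin p → Brack p) (v : ℕ → A) :
    eval op (.node f) v = op fun i => eval op (f i) (fun m => v (leafOffset f i + m)) := by
  rw [eval, evalFrom]
  simp only [evalFrom_eq_eval, zero_add]
  rfl

def Satisfies (s t : Brack p) : Prop := ∀ v, eval op s v = eval op t v

lemma satisfies_node {f g : Fin p → Brack p} (hlen : ∀ i, len (f i) = len (g i))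
    (h : ∀ i, Satisfies op (f i) (g i)) : Satisfies op (.node f) (.node g) := by
  intro v
  have hoff : leafOffset f = leafOffset g := by
    funext c
    exact Finset.sum_congr rfl fun k _ => hlen k
  simp only [eval_node, hoff, h _ _]

end eval

/-- `subst t j σ` puts `σ (j + k)` in place of the `k`-th variable occurrence of `t`. -/
def subst : Brack p → ℕ → (ℕ → Brack p) → Brack p
  | .x, j, σ => σ j
  | .node f, j, σ => .node fun i => subst (f i) (j + leafOffset f i) σ

def prefixLen (σ : ℕ → Brack p) (k : ℕ) : ℕ := ∑ m ∈ Finset.range k, len (σ m)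

lemma prefixLen_add_leafOffset_subst (σ : ℕ → Brack p) (f : Fin p → Brack p) (j : ℕ)
    (hf : ∀ i j', prefixLen σ j' + len (subst (f i) j' σ) = prefixLen σ (j' + len (f i)))
    {c : ℕ} (hc : c ≤ p) :
    prefixLen σ j + leafOffset (fun i => subst (f i) (j + leafOffset f i) σ) c =
      prefixLen σ (j + leafOffset f c) := by
  induction c with
  | zero => simp [leafOffset_zero]
  | succ c ih =>
    rw [leafOffset_succ _ hc, leafOffset_succ _ hc, ← add_assoc, ih (by omega), ← add_assoc j,
      ← hf]

lemma prefixLen_add_len_subst (σ : ℕ → Brack p) (t : Brack p) (j : ℕ) :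
    prefixLen σ j + len (subst t j σ) = prefixLen σ (j + len t) := by
  induction t generalizing j with
  | x => simp [subst, len, prefixLen, Finset.sum_range_succ]
  | node f ih =>
    rw [subst, len_node, len_node, prefixLen_add_leafOffset_subst σ f j ih le_rfl]

lemma eval_subst (op : (Fin p → A) → A) (σ : ℕ → Brack p) (w : ℕ → A) (t : Brack p)
    (j : ℕ) :
    eval op (subst t j σ) (fun m => w (prefixLen σ j + m)) =
      eval op t (fun k => eval op (σ (j + k)) (fun m => w (prefixLen σ (j + k) + m))) := by
  induction t generalizing j with
  | x => rfl
  | node f ih =>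
    rw [subst, eval_node, eval_node]
    congr 1
    funext i
    simp only [← add_assoc, prefixLen_add_leafOffset_subst σ f j
      (fun i => prefixLen_add_len_subst σ (f i)) i.isLt.le, ih]

lemma Satisfies.subst {op : (Fin p → A) → A} {s t : Brack p} (h : Satisfies op s t)
    (σ : ℕ → Brack p) : Satisfies op (s.subst 0 σ) (t.subst 0 σ) := by
  intro w
  have hs := eval_subst op σ w s 0
  have ht := eval_subst op σ w t 0
  simp only [prefixLen, Finset.range_zero, Finset.sum_empty, zero_add] at hs ht
  rw [hs, ht, h]

def nestAt (j : ℕ) : Brack p := .node fun i => if (i : ℕ) = j then .node fun _ => .x else .x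

lemma occ_nestAt {j : ℕ} (hj : j < p) : occ (nestAt j : Brack p) = 2 := by
  simp [nestAt, occ, apply_ite, Fin.sum_univ_eq_sum_range (fun i => if i = j then 1 else 0), hj]

lemma leafOffset_const_x {c : ℕ} (hc : c ≤ p) :
    leafOffset (fun _ : Fin p => (.x : Brack p)) c = c := by
  induction c with
  | zero => exact leafOffset_zero _
  | succ c ih => rw [leafOffset_succ _ hc, ih (by omega)]; rfl

lemma leafOffset_nestAt {j c : ℕ} (hc : c ≤ p) :
    leafOffset (fun i : Fin p => if (i : ℕ) = j then (.node fun _ => .x : Brack p) else .x) c =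
      c + if j < c then p - 1 else 0 := by
  induction c with
  | zero => exact leafOffset_zero _
  | succ c ih =>
    rw [leafOffset_succ _ hc, ih (by omega)]
    by_cases hcj : c = j
    · simp [hcj, len]
      omega
    · simp only [hcj, if_false, len]
      split_ifs <;> omega

lemma subst_nestAt (j : ℕ) (σ : ℕ → Brack p) :
    subst (nestAt j) 0 σ = .node fun i =>
      if (i : ℕ) = j then .node (fun i' => σ (j + i'))
      else if (i : ℕ) < j then σ i else σ (i + p - 1) := by
  rw [nestAt, subst]
  congr 1
  funext i
  rw [leafOffset_nestAt i.isLt.le, zero_add]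
  rcases lt_trichotomy (i : ℕ) j with h | h | h
  · simp [h, h.ne, h.not_gt, subst]
  · simp only [h, lt_irrefl, if_true, if_false, add_zero, subst]
    congr 1
    funext i'
    rw [leafOffset_const_x i'.isLt.le]
  · simp only [h, h.ne', h.not_gt, if_false, if_true, subst]
    congr 1
    omega

def leftNode (b : Brack p) : Brack p := .node fun i => if (i : ℕ) = 0 then b else .x

def comb (m : ℕ) : Brack p := leftNode^[m] .x

lemma comb_succ (m : ℕ) : (comb (m + 1) : Brack p) = leftNode (comb m) :=
  Function.iterate_succ_apply' _ _ _

lemma occ_leftNode (hp : 0 < p) (b : Brack p) : occ (leftNode b) = occ b + 1 := by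
  simp [leftNode, occ, apply_ite, hp, add_comm,
    Fin.sum_univ_eq_sum_range (fun i => if i = 0 then occ b else 0)]

lemma occ_comb (hp : 0 < p) (m : ℕ) : occ (comb m : Brack p) = m := by
  induction m with
  | zero => rfl
  | succ m ih => rw [comb_succ, occ_leftNode hp, ih]

lemma node_comb_eq_comb_of_forall_pos (hp : 0 < p) {n : ℕ → ℕ}
    (hn : ∀ i, 0 < i → n i = 0) :
    (.node fun i : Fin p => comb (n i)) = comb ((∑ i ∈ Finset.range p, n i) + 1) := by
  rw [Finset.sum_eq_single 0 (fun i _ hi => hn i (by omega)) (by simp [hp]), comb_succ, leftNode]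
  congr 1
  funext i
  split_ifs with h
  · rw [h]
  · rw [hn i (by omega)]
    rfl

lemma occ_node_comb (hp : 0 < p) (n : ℕ → ℕ) :
    occ (.node fun i : Fin p => comb (n i)) = (∑ i ∈ Finset.range p, n i) + 1 := by
  simp only [occ, occ_comb hp, Fin.sum_univ_eq_sum_range n, add_comm]

section satisfies

variable {op : (Fin p → A) → A}

lemma Satisfies.trans {s t u : Brack p} (h : Satisfies op s t) (h' : Satisfies op t u) :
    Satisfies op s u :=
  fun v => (h v).trans (h' v)

lemma satisfies_leftNode {s t : Brack p} (hlen : len s = len t) (h : Satisfies op s t) :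
    Satisfies op (leftNode s) (leftNode t) := by
  refine satisfies_node op (fun i => ?_) (fun i => ?_) <;> split_ifs
  exacts [hlen, rfl, h, fun _ => rfl]

variable (h2 : ∀ s t : Brack p, occ s = 2 → occ t = 2 → Satisfies op s t)
include h2

lemma satisfies_node_leftNode_update {j : ℕ} (hj : j < p) {c : ℕ → Brack p}
    (hc : ∀ i, j < i → c i = .x) {b : Brack p} (hb : c j = leftNode b) :
    Satisfies op (.node fun i => c i) (leftNode (.node fun i => Function.update c j b i)) := by
  set σ := Function.update c j b with hσ_def
  have hσ : ∀ i, j < i → σ i = .x := fun i hi => by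
    rw [hσ_def, Function.update_of_ne hi.ne', hc i hi]
  have e1 : subst (nestAt j) 0 σ = .node fun i => c i := by
    rw [subst_nestAt]
    congr 1
    funext i
    rcases lt_trichotomy (i : ℕ) j with h | h | h
    · simp [h, h.ne, σ]
    · rw [if_pos h, h, hb, leftNode]
      congr 1
      funext i'
      split_ifs with h'
      · simp [σ, h']
      · exact hσ _ (by omega)
    · rw [if_neg h.ne', if_neg h.not_gt, hσ _ (by omega), hc _ h]
  have e2 : subst (nestAt 0) 0 σ = leftNode (.node fun i => σ i) := by
    rw [subst_nestAt, leftNode]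
    congr 1
    funext i
    split_ifs with h h'
    · simp
    · omega
    · exact hσ _ (by omega)
  have key := (h2 (nestAt j) (nestAt 0) (occ_nestAt hj) (occ_nestAt (by omega))).subst σ
  rwa [e1, e2] at key

lemma satisfies_node_comb_update {j : ℕ} (hj : j < p) {n : ℕ → ℕ}
    (hn : ∀ i, j < i → n i = 0) {m : ℕ} (hm : n j = m + 1) :
    Satisfies op (.node fun i => comb (n i))
      (leftNode (.node fun i => comb (Function.update n j m i))) := by
  have h := satisfies_node_leftNode_update h2 hj (c := fun i => comb (n i))
    (fun i hi => by rw [hn i hi]; rfl) (b := comb m) (by rw [hm, comb_succ])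
  rwa [show Function.update (fun i => comb (n i)) j (comb m) =
    fun i => comb (Function.update n j m i) from (Function.comp_update comb n j m).symm] at h

lemma satisfies_node_comb (hp : 0 < p) {j : ℕ} (hj : j < p) :
    ∀ n : ℕ → ℕ, (∀ i, j < i → n i = 0) →
      Satisfies op (.node fun i => comb (n i)) (comb ((∑ i ∈ Finset.range p, n i) + 1)) := by
  induction j with
  | zero =>
    intro n hn
    rw [node_comb_eq_comb_of_forall_pos hp hn]
    exact fun _ => rfl
  | succ j ih =>
    intro n hn
    induction hm : n (j + 1) generalizing n with
    | zero =>
      refine ih (by omega) n fun i hi => ?_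
      rcases (show j + 1 = i ∨ j + 1 < i by omega) with rfl | hi'
      exacts [hm, hn i hi']
    | succ m ihm =>
      set n' := Function.update n (j + 1) m with hn'
      have hmem : j + 1 ∈ Finset.range p := Finset.mem_range.2 hj
      have hsum : ∑ i ∈ Finset.range p, n i = (∑ i ∈ Finset.range p, n' i) + 1 := by
        rw [hn', Finset.sum_update_of_mem hmem,
          Finset.sum_eq_add_sum_sdiff_singleton_of_mem hmem, hm]
        ring
      have hinner := ihm n' (fun i hi => by rw [hn', Function.update_of_ne hi.ne', hn i hi])
        (Function.update_self ..)
      rw [hsum, comb_succ]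
      refine (satisfies_node_comb_update h2 hj hn hm).trans (satisfies_leftNode ?_ hinner)
      rw [len_eq_of_pos hp, len_eq_of_pos hp, occ_node_comb hp, occ_comb hp]

lemma satisfies_comb_occ (hp : 0 < p) (t : Brack p) : Satisfies op t (comb (occ t)) := by
  induction t with
  | x => exact fun _ => rfl
  | node f ih =>
    set n : ℕ → ℕ := fun k => if h : k < p then occ (f ⟨k, h⟩) else 0
    have hn : ∀ i : Fin p, n i = occ (f i) := fun i => dif_pos i.isLt
    have hchildren : Satisfies op (.node f) (.node fun i => comb (n i)) :=
      satisfies_node op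
        (fun i => by rw [len_eq_of_pos hp, len_eq_of_pos hp, occ_comb hp, hn])
        (fun i => hn i ▸ ih i)
    have hocc : occ (.node f) = occ (.node fun i : Fin p => (comb (n i) : Brack p)) := by
      simp only [occ, occ_comb hp, hn]
    rw [hocc, occ_node_comb hp]
    exact hchildren.trans
      (satisfies_node_comb h2 hp (j := p - 1) (by omega) n fun i hi => dif_neg (by omega))

end satisfies

end Brack

theorem stmt_12 (p : ℕ) (hp : 2 ≤ p) (A : Type*) (op : (Fin p → A) → A)
    (h2 : ∀ s t : Brack p, Brack.occ s = 2 → Brack.occ t = 2 →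
      ∀ v : ℕ → A, Brack.eval op s v = Brack.eval op t v) :
    ∀ (n : ℕ) (s t : Brack p), Brack.occ s = n → Brack.occ t = n →
      ∀ v : ℕ → A, Brack.eval op s v = Brack.eval op t v := by
  intro n s t hs ht v
  have hp0 : 0 < p := by omega
  rw [Brack.satisfies_comb_occ h2 hp0 s v, Brack.satisfies_comb_occ h2 hp0 t v, hs, ht]
end

section
/- Let G be the groupoid on the polynomial ring ℤ/6ℤ[Y] with operation X_1 ⊕ X_2 := 3Y·X_1 + 2Y·X_2. For every binary bracketing s with n ≥ 1 operation occurrences, the induced term function is (X_1,…,X_{n+1}) ↦ (3Y)^{d_l(s)} · X_1 + (2Y)^{d_r(s)} · X_{n+1}, where d_l(s) is the depth of the leftmost leaf and d_r(s) the depth of the rightmost leaf of the binary tree of s. -/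
/-- the operation ⊕ on ℤ/6ℤ[Y] : (X₁, X₂) ↦ 3Y·X₁ + 2Y·X₂ -/
noncomputable def oplus : (Fin 2 → Polynomial (ZMod 6)) → Polynomial (ZMod 6) :=
  fun v => 3 * Polynomial.X * v 0 + 2 * Polynomial.X * v 1

lemma mul32 : (3 * Polynomial.X : Polynomial (ZMod 6)) * (2 * Polynomial.X) = 0 := by
  have h6 : ((3 : ZMod 6) * 2) = 0 := by decide
  have h : (3 * Polynomial.X : Polynomial (ZMod 6)) * (2 * Polynomial.X) =
      Polynomial.C ((3 : ZMod 6) * 2) * Polynomial.X ^ 2 := by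
    simp only [map_mul, map_ofNat]
    ring
  rw [h, h6, map_zero, zero_mul]

lemma mul23 : (2 * Polynomial.X : Polynomial (ZMod 6)) * (3 * Polynomial.X) = 0 := by
  rw [mul_comm]; exact mul32

lemma filt0 : (Finset.univ.filter (· < (0 : Fin 2))) = ∅ := by decide

lemma filt1 : (Finset.univ.filter (· < (1 : Fin 2))) = {0} := by decide

lemma evalFrom_node (f : Fin 2 → Brack 2) (v : ℕ → Polynomial (ZMod 6)) (j : ℕ) :
    Brack.evalFrom oplus v (.node f) j =
      3 * Polynomial.X * Brack.evalFrom oplus v (f 0) j +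
      2 * Polynomial.X * Brack.evalFrom oplus v (f 1) (j + (f 0).len) := by
  show oplus _ = _
  unfold oplus
  beta_reduce
  rw [filt0, filt1]
  simp

lemma len_eq_occ (t : Brack 2) : t.len = t.occ + 1 := by
  induction t with
  | x => rfl
  | node f ih =>
    simp only [Brack.len, Brack.occ, Fin.sum_univ_two, ih 0, ih 1]
    omega

lemma keyL (t : Brack 2) (v : ℕ → Polynomial (ZMod 6)) (j : ℕ) :
    3 * Polynomial.X * Brack.evalFrom oplus v t j =
      (3 * Polynomial.X) ^ (t.dl + 1) * v j := by
  induction t generalizing j with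
  | x => simp [Brack.evalFrom, Brack.dl]
  | node f ih =>
    rw [evalFrom_node]
    set A := Brack.evalFrom oplus v (f 0) j with hA
    set B := Brack.evalFrom oplus v (f 1) (j + (f 0).len) with hB
    have h1 : (3 * Polynomial.X : Polynomial (ZMod 6)) *
        (3 * Polynomial.X * A + 2 * Polynomial.X * B) =
        3 * Polynomial.X * (3 * Polynomial.X * A) := by
      rw [mul_add, ← mul_assoc (3 * Polynomial.X) (2 * Polynomial.X) B, mul32,
        zero_mul, add_zero]
    rw [h1, hA, ih 0 j]
    simp only [Brack.dl]
    ring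

lemma keyR (t : Brack 2) (v : ℕ → Polynomial (ZMod 6)) (j : ℕ) :
    2 * Polynomial.X * Brack.evalFrom oplus v t j =
      (2 * Polynomial.X) ^ (t.dr + 1) * v (j + t.len - 1) := by
  induction t generalizing j with
  | x => simp [Brack.evalFrom, Brack.dr, Brack.len]
  | node f ih =>
    rw [evalFrom_node]
    set A := Brack.evalFrom oplus v (f 0) j with hA
    set B := Brack.evalFrom oplus v (f 1) (j + (f 0).len) with hB
    have h1 : (2 * Polynomial.X : Polynomial (ZMod 6)) *
        (3 * Polynomial.X * A + 2 * Polynomial.X * B) =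
        2 * Polynomial.X * (2 * Polynomial.X * B) := by
      rw [mul_add, ← mul_assoc (2 * Polynomial.X) (3 * Polynomial.X) A, mul23,
        zero_mul, zero_add]
    rw [h1, hB, ih 1 (j + (f 0).len)]
    have hlen : (Brack.node f : Brack 2).len = (f 0).len + (f 1).len := by
      simp [Brack.len, Fin.sum_univ_two]
    have harg : j + (f 0).len + (f 1).len - 1 = j + (Brack.node f : Brack 2).len - 1 := by
      rw [hlen]; omega
    rw [harg]
    simp only [Brack.dr]
    ring

theorem stmt_14 (s : Brack 2) (hs : 1 ≤ Brack.occ s) (v : ℕ → Polynomial (ZMod 6)) :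
    Brack.eval oplus s v =
      (3 * Polynomial.X) ^ Brack.dl s * v 0 +
        (2 * Polynomial.X) ^ Brack.dr s * v (Brack.occ s) := by
  cases s with
  | x => simp [Brack.occ] at hs
  | node f =>
    show Brack.evalFrom oplus v _ 0 = _
    rw [evalFrom_node, keyL, keyR]
    have h0 : (f 0).len = (f 0).occ + 1 := len_eq_occ _
    have h1 : (f 1).len = (f 1).occ + 1 := len_eq_occ _
    have hocc : (Brack.node f : Brack 2).occ = 1 + ((f 0).occ + (f 1).occ) := by
      simp [Brack.occ, Fin.sum_univ_two]
    have harg : 0 + (f 0).len + (f 1).len - 1 = (Brack.node f : Brack 2).occ := by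
      omega
    rw [harg]
    simp only [Brack.dl, Brack.dr]
end

section
/- Two binary bracketings s, t with the same number n ≥ 2 of operation occurrences induce the same term function on the groupoid (ℤ/6ℤ[Y], ⊕) with X_1 ⊕ X_2 = 3Y·X_1 + 2Y·X_2 if and only if d_l(s) = d_l(t) and d_r(s) = d_r(t); consequently, the number of equivalence classes of bracketings with n operation occurrences under equality of induced term functions is (n² + n − 2)/2. -/
/-- the setoid of equality of induced term functions on bracketings with n occurrences -/
def tfSetoid {A : Type*} (op : (Fin 2 → A) → A) (n : ℕ) :
    Setoid {t : Brack 2 // Brack.occ t = n} :=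
  ⟨fun s t => ∀ v : ℕ → A, Brack.eval op s.1 v = Brack.eval op t.1 v,
    ⟨fun _ _ => rfl, fun h v => (h v).symm, fun h1 h2 v => (h1 v).trans (h2 v)⟩⟩

/-!
For an operation `(x, y) ↦ a x + b y` with `a b = 0`, every bracketing `t ≠ x` evaluates to
`a ^ d_l(t) · x_1 + b ^ d_r(t) · x_{occ t + 1}`: multiplying a subterm by `a` kills everything but
its leftmost variable, and multiplying by `b` everything but its rightmost one. In `ℤ/6ℤ[Y]` take
`a = 3Y`, `b = 2Y`; as `2` and `3` are not nilpotent, `k ↦ a ^ k` and `k ↦ b ^ k` are injective, so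
the term function is exactly the pair `(d_l, d_r)`. For `n ≥ 2` the pairs that occur are those
with `1 ≤ d_l, d_r` and `d_l + d_r ≤ n + 1` except `(1, 1)`, which gives the count.
-/

namespace Brack

@[simp] lemma occ_x {p : ℕ} : occ (.x : Brack p) = 0 := rfl

@[simp] lemma occ_node_two (f : Fin 2 → Brack 2) :
    occ (.node f) = occ (f 0) + occ (f 1) + 1 := by
  simp [occ, Fin.sum_univ_two]; omega

@[simp] lemma dl_x : dl .x = 0 := rfl

@[simp] lemma dr_x : dr .x = 0 := rfl

@[simp] lemma dl_node (f : Fin 2 → Brack 2) : dl (.node f) = dl (f 0) + 1 := rfl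

@[simp] lemma dr_node (f : Fin 2 → Brack 2) : dr (.node f) = dr (f 1) + 1 := rfl

@[simp] lemma len_node_two (f : Fin 2 → Brack 2) : len (.node f) = len (f 0) + len (f 1) := by
  simp [len, Fin.sum_univ_two]

lemma len_eq_occ_add_one (t : Brack 2) : len t = occ t + 1 := by
  induction t with
  | x => rfl
  | node f ih => simp [ih]; omega

lemma evalFrom_node_two {A : Type*} (op : (Fin 2 → A) → A) (v : ℕ → A) (f : Fin 2 → Brack 2)
    (j : ℕ) : evalFrom op v (.node f) j =
      op ![evalFrom op v (f 0) j, evalFrom op v (f 1) (j + len (f 0))] := by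
  rw [evalFrom]
  congr 1
  ext i
  fin_cases i <;> simp [Fin.lt_def, Finset.filter_eq']

end Brack

def linearOp {R : Type*} [CommSemiring R] (a b : R) (w : Fin 2 → R) : R := a * w 0 + b * w 1

namespace Brack

section LinearOp

variable {R : Type*} [CommSemiring R] {a b : R}

lemma mul_evalFrom_linearOp (hab : a * b = 0) (v : ℕ → R) (t : Brack 2) (j : ℕ) :
    a * evalFrom (linearOp a b) v t j = a ^ (dl t + 1) * v j ∧
      b * evalFrom (linearOp a b) v t j = b ^ (dr t + 1) * v (j + occ t) := by
  induction t generalizing j with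
  | x => simp [evalFrom]
  | node f ih =>
    obtain ⟨hl, -⟩ := ih 0 j
    obtain ⟨-, hr⟩ := ih 1 (j + len (f 0))
    rw [evalFrom_node_two, linearOp]
    simp only [Matrix.cons_val_zero, Matrix.cons_val_one, Matrix.cons_val_fin_one]
    rw [mul_add, mul_add, ← mul_assoc a b, ← mul_assoc b a, hab, mul_comm b a, hab, hl, hr,
      len_eq_occ_add_one]
    refine ⟨?_, ?_⟩
    · rw [dl_node]; ring
    · rw [dr_node, occ_node_two]; ring_nf

lemma evalFrom_linearOp_of_occ_ne_zero (hab : a * b = 0) (v : ℕ → R) {t : Brack 2}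
    (ht : occ t ≠ 0) (j : ℕ) :
    evalFrom (linearOp a b) v t j = a ^ dl t * v j + b ^ dr t * v (j + occ t) := by
  cases t with
  | x => simp at ht
  | node f =>
    rw [evalFrom_node_two, linearOp]
    simp only [Matrix.cons_val_zero, Matrix.cons_val_one, Matrix.cons_val_fin_one]
    rw [(mul_evalFrom_linearOp hab v (f 0) j).1, (mul_evalFrom_linearOp hab v (f 1) _).2,
      len_eq_occ_add_one, occ_node_two, dl_node, dr_node]
    ring_nf

lemma eval_linearOp_eq_iff (hab : a * b = 0) (ha : Function.Injective (a ^ · : ℕ → R))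
    (hb : Function.Injective (b ^ · : ℕ → R)) {n : ℕ} (hn : n ≠ 0) {s t : Brack 2}
    (hs : occ s = n) (ht : occ t = n) :
    (∀ v, eval (linearOp a b) s v = eval (linearOp a b) t v) ↔ dl s = dl t ∧ dr s = dr t := by
  have eval_eq {u : Brack 2} (hu : occ u = n) (v : ℕ → R) :
      eval (linearOp a b) u v = a ^ dl u * v 0 + b ^ dr u * v n := by
    rw [eval, evalFrom_linearOp_of_occ_ne_zero hab v (hu ▸ hn), hu, zero_add]
  refine ⟨fun h => ⟨ha ?_, hb ?_⟩, fun ⟨hl, hr⟩ v => by rw [eval_eq hs, eval_eq ht, hl, hr]⟩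
  · simpa [eval_eq hs, eval_eq ht, hn] using h (Pi.single 0 1)
  · simpa [eval_eq hs, eval_eq ht, Ne.symm hn] using h (Pi.single n 1)

end LinearOp

end Brack

open Polynomial

lemma Polynomial.pow_injective_C_mul_X {R : Type*} [CommSemiring R] {c : R}
    (hc : ¬IsNilpotent c) : Function.Injective ((C c * X) ^ · : ℕ → R[X]) := by
  intro k l hkl
  have hdeg := congrArg natDegree hkl
  simp only [mul_pow, ← C_pow] at hdeg
  rwa [natDegree_C_mul_X_pow _ _ (fun h => hc ⟨k, h⟩),
    natDegree_C_mul_X_pow _ _ (fun h => hc ⟨l, h⟩)] at hdeg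

lemma not_isNilpotent_two_zmod_six : ¬IsNilpotent (2 : ZMod 6) := fun h => by
  have := h.map (ZMod.castHom (by norm_num : 3 ∣ 6) (ZMod 3))
  rw [map_ofNat, isNilpotent_iff_eq_zero] at this
  exact absurd this (by decide)

lemma not_isNilpotent_three_zmod_six : ¬IsNilpotent (3 : ZMod 6) := fun h => by
  have := h.map (ZMod.castHom (by norm_num : 2 ∣ 6) (ZMod 2))
  rw [map_ofNat, isNilpotent_iff_eq_zero] at this
  exact absurd this (by decide)

lemma three_X_mul_two_X : (3 * X : (ZMod 6)[X]) * (2 * X) = 0 := by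
  have h6 : (6 : (ZMod 6)[X]) = 0 := CharP.ofNat_eq_zero _ 6
  linear_combination X ^ 2 * h6

lemma Brack.eval_oplus_eq_iff {n : ℕ} (hn : n ≠ 0) {s t : Brack 2} (hs : s.occ = n)
    (ht : t.occ = n) :
    (∀ v, s.eval oplus v = t.eval oplus v) ↔ s.dl = t.dl ∧ s.dr = t.dr := by
  refine Brack.eval_linearOp_eq_iff three_X_mul_two_X ?_ ?_ hn hs ht
  · simpa only [C_ofNat] using pow_injective_C_mul_X not_isNilpotent_three_zmod_six
  · simpa only [C_ofNat] using pow_injective_C_mul_X not_isNilpotent_two_zmod_six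

namespace Brack

lemma dl_le_occ (t : Brack 2) : dl t ≤ occ t := by
  induction t with
  | x => rfl
  | node f ih => simp only [dl_node, occ_node_two]; have := ih 0; omega

lemma dr_le_occ (t : Brack 2) : dr t ≤ occ t := by
  induction t with
  | x => rfl
  | node f ih => simp only [dr_node, occ_node_two]; have := ih 1; omega

lemma dl_add_dr_le_occ_add_one (t : Brack 2) : dl t + dr t ≤ occ t + 1 := by
  cases t with
  | x => simp
  | node f =>
    have := dl_le_occ (f 0)
    have := dr_le_occ (f 1)
    simp only [dl_node, dr_node, occ_node_two]
    omega

lemma dl_eq_zero_iff {t : Brack 2} : dl t = 0 ↔ occ t = 0 := by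
  cases t <;> simp

lemma dr_eq_zero_iff {t : Brack 2} : dr t = 0 ↔ occ t = 0 := by
  cases t <;> simp

lemma one_lt_dl_or_one_lt_dr {t : Brack 2} (ht : 2 ≤ occ t) : 1 < dl t ∨ 1 < dr t := by
  cases t with
  | x => simp at ht
  | node f =>
    by_contra! h
    simp only [dl_node, dr_node] at h
    have h0 : occ (f 0) = 0 := dl_eq_zero_iff.mp (by omega)
    have h1 : occ (f 1) = 0 := dr_eq_zero_iff.mp (by omega)
    simp only [occ_node_two] at ht
    omega

def leftComb : ℕ → Brack 2
  | 0 => .x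
  | k + 1 => .node ![leftComb k, .x]

def rightComb : ℕ → Brack 2
  | 0 => .x
  | k + 1 => .node ![.x, rightComb k]

@[simp] lemma occ_leftComb (k : ℕ) : occ (leftComb k) = k := by
  induction k with
  | zero => rfl
  | succ k ih => simp [leftComb, ih]

@[simp] lemma dl_leftComb (k : ℕ) : dl (leftComb k) = k := by
  induction k with
  | zero => rfl
  | succ k ih => simp [leftComb, ih]

@[simp] lemma occ_rightComb (k : ℕ) : occ (rightComb k) = k := by
  induction k with
  | zero => rfl
  | succ k ih => simp [rightComb, ih]

@[simp] lemma dr_rightComb (k : ℕ) : dr (rightComb k) = k := by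
  induction k with
  | zero => rfl
  | succ k ih => simp [rightComb, ih]

lemma exists_occ_dl_dr {n a b : ℕ} (hab : a + b < n) (h00 : (a, b) ≠ (0, 0)) :
    ∃ t : Brack 2, occ t = n ∧ dl t = a + 1 ∧ dr t = b + 1 := by
  rcases Nat.eq_zero_or_pos a with rfl | ha
  · have hb : 0 < b := Nat.pos_of_ne_zero (by simpa using h00)
    refine ⟨.node ![.x, .node ![leftComb (n - 1 - b), rightComb (b - 1)]], ?_, ?_, ?_⟩ <;>
      simp <;> omega
  · refine ⟨.node ![.node ![leftComb (a - 1), rightComb (n - 1 - a - b)], rightComb b],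
      ?_, ?_, ?_⟩ <;> simp <;> omega

end Brack

open Finset in
lemma mem_biUnion_range_antidiagonal {m : ℕ} {p : ℕ × ℕ} :
    p ∈ (range m).biUnion antidiagonal ↔ p.1 + p.2 < m := by
  simp

open Finset in
lemma card_biUnion_range_antidiagonal (m : ℕ) :
    #((range m).biUnion antidiagonal) = m * (m + 1) / 2 := by
  rw [card_biUnion fun i _ j _ hij => disjoint_left.mpr fun p hi hj =>
    hij ((mem_antidiagonal.mp hi).symm.trans (mem_antidiagonal.mp hj))]
  simp only [Nat.card_antidiagonal]
  have h := sum_range_succ' (fun i => i) m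
  simp only [add_zero] at h
  rw [← h, sum_range_id, Nat.add_sub_cancel, mul_comm]

open Finset in
lemma card_quotient_tfSetoid_oplus {n : ℕ} (hn : 2 ≤ n) :
    Nat.card (Quotient (tfSetoid oplus n)) = (n ^ 2 + n - 2) / 2 := by
  have hn0 : n ≠ 0 := by omega
  -- shifted by one, so that the image is the triangle `a + b < n` without its corner `(0, 0)`
  let depths : Quotient (tfSetoid oplus n) → ℕ × ℕ :=
    Quotient.lift (fun t => (t.1.dl - 1, t.1.dr - 1)) fun s t hst => by
      obtain ⟨hl, hr⟩ := (Brack.eval_oplus_eq_iff hn0 s.2 t.2).mp hst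
      rw [hl, hr]
  have hpos {t : Brack 2} (ht : t.occ = n) : 0 < t.dl ∧ 0 < t.dr :=
    ⟨Nat.pos_of_ne_zero (Brack.dl_eq_zero_iff.not.mpr (ht ▸ hn0)),
      Nat.pos_of_ne_zero (Brack.dr_eq_zero_iff.not.mpr (ht ▸ hn0))⟩
  have hinj : Function.Injective depths := by
    rintro ⟨s, hs⟩ ⟨t, ht⟩ hst
    simp only [depths, Prod.mk.injEq] at hst
    refine Quotient.sound ((Brack.eval_oplus_eq_iff hn0 hs ht).mpr ?_)
    have := hpos hs
    have := hpos ht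
    omega
  have hrange : Set.range depths = ((range n).biUnion antidiagonal).erase (0, 0) := by
    ext ⟨a, b⟩
    rw [coe_erase, Set.mem_sdiff, mem_coe, mem_biUnion_range_antidiagonal, Set.mem_singleton_iff]
    constructor
    · rintro ⟨⟨t, ht⟩, hab⟩
      simp only [depths, Prod.mk.injEq] at hab
      have := hpos ht
      have := t.dl_add_dr_le_occ_add_one
      have := Brack.one_lt_dl_or_one_lt_dr (ht.trans_ge hn)
      simp only [Prod.mk.injEq]
      omega
    · rintro ⟨hk, h00⟩
      obtain ⟨t, ht, hl, hr⟩ := Brack.exists_occ_dl_dr hk h00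
      exact ⟨⟦⟨t, ht⟩⟧, by simp [depths, hl, hr]⟩
  rw [← Nat.card_range_of_injective hinj, hrange, Nat.card_coe_set_eq, Set.ncard_coe_finset,
    card_erase_of_mem, card_biUnion_range_antidiagonal]
  · rw [show n ^ 2 + n = n * (n + 1) by ring]
    omega
  · exact mem_biUnion_range_antidiagonal.mpr (Nat.pos_of_ne_zero hn0)

theorem stmt_15 (n : ℕ) (hn : 2 ≤ n) :
    (∀ s t : Brack 2, Brack.occ s = n → Brack.occ t = n →
      ((∀ v : ℕ → Polynomial (ZMod 6), Brack.eval oplus s v = Brack.eval oplus t v) ↔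
        (Brack.dl s = Brack.dl t ∧ Brack.dr s = Brack.dr t))) ∧
    Nat.card (Quotient (tfSetoid oplus n)) = (n ^ 2 + n - 2) / 2 :=
  ⟨fun _ _ => Brack.eval_oplus_eq_iff (by omega), card_quotient_tfSetoid_oplus hn⟩
end
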